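/- Let 1 ≤ p < ∞, let ψ ∈ C_c(ℝ) be a continuous compactly supported function, and let a > 0. Then ‖ψ(·) cos(λ·)‖_{L^p(ℝ)} → (π^{-1} ∫_0^π |cos x|^p dx)^{1/p} ‖ψ‖_{L^p(ℝ)} as λ → ∞. -/

import Mathlib

/-!
Write `|ψ x * cos (λ x)| ^ p = f x * g (λ x)` with `f = |ψ| ^ p` integrable and `g = |cos| ^ p`
continuous and `π`-periodic. It suffices to show that `∫ f (x) G (λ x) dx → (mean of G) * ∫ f` for
every continuous `G` on the circle `ℝ / Tℤ`. For a Fourier mode `G = e_n` this is trivial when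
`n = 0` and the Riemann–Lebesgue lemma when `n ≠ 0`. The functionals `G ↦ ∫ f (x) G (λ x) dx` are
Lipschitz with constant `‖f‖₁` uniformly in `λ`, so the set of `G` for which the convergence holds
is closed; it contains the span of the Fourier modes, which is dense by Stone–Weierstrass.
-/

open MeasureTheory Filter Topology Real

section IntegralMulContinuousMap

variable {X Y 𝕜 : Type*} [MeasurableSpace X] [TopologicalSpace X] [OpensMeasurableSpace X]
  [TopologicalSpace Y] [CompactSpace Y] [RCLike 𝕜] {μ : Measure X} {f : X → 𝕜} {φ : X → Y}

lemma MeasureTheory.Integrable.mul_continuousMap_comp (hf : Integrable f μ) (hφ : Continuous φ)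
    (G : C(Y, 𝕜)) : Integrable (fun x => f x * G (φ x)) μ :=
  hf.mul_bdd (G.continuous.comp hφ).aestronglyMeasurable
    (ae_of_all _ fun x => G.norm_coe_le_norm (φ x))

lemma integral_mul_continuousMap_comp_add (hf : Integrable f μ) (hφ : Continuous φ)
    (G H : C(Y, 𝕜)) :
    ∫ x, f x * (G (φ x) + H (φ x)) ∂μ = (∫ x, f x * G (φ x) ∂μ) + ∫ x, f x * H (φ x) ∂μ := by
  simp only [mul_add]
  exact integral_add (hf.mul_continuousMap_comp hφ G) (hf.mul_continuousMap_comp hφ H)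

lemma lipschitzWith_integral_mul_continuousMap_comp (hf : Integrable f μ) (hφ : Continuous φ) :
    LipschitzWith (∫ x, ‖f x‖ ∂μ).toNNReal fun G : C(Y, 𝕜) => ∫ x, f x * G (φ x) ∂μ := by
  refine LipschitzWith.of_dist_le' fun G H => ?_
  rw [dist_eq_norm, dist_eq_norm, ← integral_sub (hf.mul_continuousMap_comp hφ G)
    (hf.mul_continuousMap_comp hφ H), ← integral_mul_const]
  refine norm_integral_le_of_norm_le (hf.norm.mul_const _) (ae_of_all _ fun x => ?_)
  rw [← mul_sub, norm_mul, ← ContinuousMap.sub_apply]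
  exact mul_le_mul_of_nonneg_left ((G - H).norm_coe_le_norm _) (norm_nonneg _)

end IntegralMulContinuousMap

section AddCircle

variable {T : ℝ} [hT : Fact (0 < T)] {f : ℝ → ℂ}

lemma integral_fourier_haarAddCircle (n : ℤ) :
    ∫ u : AddCircle T, fourier n u ∂AddCircle.haarAddCircle = if n = 0 then 1 else 0 := by
  split_ifs with hn
  · simp [hn]
  · exact integral_eq_zero_of_add_right_eq_neg (fourier_add_half_inv_index hn hT.out)

lemma tendsto_integral_mul_fourier_of_ne_zero {n : ℤ} (hn : n ≠ 0) :
    Tendsto (fun l : ℝ => ∫ x, f x * fourier n (l * x : AddCircle T)) atTop (𝓝 0) := by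
  have hc : -(n / T) ≠ 0 := by simp [hn, hT.out.ne']
  have hfreq : Tendsto (fun l : ℝ => -(n / T) * l) atTop (cocompact ℝ) :=
    Tendsto.mono_left (Homeomorph.mulLeft₀ _ hc).map_cocompact.le atTop_le_cocompact
  refine ((Real.tendsto_integral_exp_smul_cocompact f).comp hfreq).congr fun l => ?_
  refine integral_congr_ae (ae_of_all _ fun x => ?_)
  simp only [Circle.smul_def, Real.fourierChar_apply, fourier_coe_apply, smul_eq_mul,
    mul_comm (f x)]
  congr 2
  push_cast
  field_simp

lemma tendsto_integral_mul_fourier (n : ℤ) :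
    Tendsto (fun l : ℝ => ∫ x, f x * fourier n (l * x : AddCircle T)) atTop
      (𝓝 ((∫ u : AddCircle T, fourier n u ∂AddCircle.haarAddCircle) * ∫ x, f x)) := by
  rw [integral_fourier_haarAddCircle]
  split_ifs with hn
  · simp [hn]
  · simpa using tendsto_integral_mul_fourier_of_ne_zero hn

theorem ContinuousMap.tendsto_integral_mul_comp_mul (G : C(AddCircle T, ℂ)) (hf : Integrable f) :
    Tendsto (fun l : ℝ => ∫ x, f x * G (l * x : ℝ)) atTop
      (𝓝 ((∫ u, G u ∂AddCircle.haarAddCircle) * ∫ x, f x)) := by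
  have hscale (l : ℝ) : Continuous fun x : ℝ => ((l * x : ℝ) : AddCircle T) := by fun_prop
  have hmean : Continuous fun G : C(AddCircle T, ℂ) => ∫ u, G u ∂AddCircle.haarAddCircle := by
    simpa using (lipschitzWith_integral_mul_continuousMap_comp (integrable_const (1 : ℂ))
      continuous_id (μ := AddCircle.haarAddCircle)).continuous
  have hclosed : IsClosed {G : C(AddCircle T, ℂ) |
      Tendsto (fun l : ℝ => ∫ x, f x * G (l * x : ℝ)) atTop
        (𝓝 ((∫ u, G u ∂AddCircle.haarAddCircle) * ∫ x, f x))} :=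
    (LipschitzWith.uniformEquicontinuous _ _ fun l =>
      lipschitzWith_integral_mul_continuousMap_comp hf (hscale l)).equicontinuous
      |>.isClosed_setOfPred_tendsto (hmean.mul continuous_const)
  have hdense :
      G ∈ closure (Submodule.span ℂ (Set.range (@fourier T)) : Set C(AddCircle T, ℂ)) := by
    rw [← Submodule.topologicalClosure_coe, span_fourier_closure_eq_top]; trivial
  refine hclosed.closure_subset_iff.2 (fun G hG => ?_) hdense
  induction hG using Submodule.span_induction with
  | mem _ hG => obtain ⟨n, rfl⟩ := hG; exact tendsto_integral_mul_fourier n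
  | zero => simp
  | add G H _ _ hG hH =>
    have hint (K : C(AddCircle T, ℂ)) : Integrable K AddCircle.haarAddCircle :=
      K.continuous.integrable_of_hasCompactSupport (HasCompactSupport.of_compactSpace _)
    simp only [Set.mem_ofPred_eq, ContinuousMap.add_apply,
      fun l => integral_mul_continuousMap_comp_add hf (hscale l) G H,
      integral_add (hint G) (hint H), add_mul] at hG hH ⊢
    exact hG.add hH
  | smul c G _ hG =>
    simp only [Set.mem_ofPred_eq, ContinuousMap.smul_apply, smul_eq_mul, mul_left_comm (f _),
      integral_const_mul, mul_assoc] at hG ⊢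
    exact hG.const_mul c

end AddCircle

theorem Function.Periodic.tendsto_integral_mul_comp_mul {T : ℝ} {f g : ℝ → ℝ}
    (hgT : Function.Periodic g T) (hT : 0 < T) (hg : Continuous g) (hf : Integrable f) :
    Tendsto (fun l : ℝ => ∫ x, f x * g (l * x)) atTop
      (𝓝 ((∫ u in Set.Ioc 0 T, g u) / T * ∫ x, f x)) := by
  have := Fact.mk hT
  let G : C(AddCircle T, ℂ) :=
    ⟨fun u => (hgT.lift u : ℂ), Complex.continuous_ofReal.comp (hg.quotient_liftOn' _)⟩
  have hG (x : ℝ) : G x = g x := rfl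
  have hmean : ∫ u, G u ∂AddCircle.haarAddCircle = ((∫ u in Set.Ioc 0 T, g u) / T : ℝ) := by
    rw [AddCircle.integral_haarAddCircle, ← AddCircle.integral_preimage T 0, zero_add]
    simp only [hG, integral_complex_ofReal, Complex.real_smul]
    push_cast
    ring
  rw [← tendsto_ofReal_iff]
  convert G.tendsto_integral_mul_comp_mul hf.ofReal using 2 with l
  · simp only [hG, ← integral_complex_ofReal]
    push_cast
    rfl
  · rw [hmean, integral_ofReal, Complex.ofReal_mul]
    rfl

theorem stmt4 (p : ℝ) (hp : 1 ≤ p) (ψ : ℝ → ℝ) (hc : Continuous ψ)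
    (hs : HasCompactSupport ψ) :
    Tendsto (fun lam : ℝ => (∫ x : ℝ, |ψ x * Real.cos (lam * x)| ^ p) ^ (1/p)) atTop
      (𝓝 ((((∫ x in Set.Ioc (0:ℝ) π, |Real.cos x| ^ p) / π) ^ (1/p)) *
        (∫ x : ℝ, |ψ x| ^ p) ^ (1/p))) := by
  have hp0 : 0 < p := zero_lt_one.trans_le hp
  have hψp : Integrable fun x => |ψ x| ^ p :=
    (hc.abs.rpow_const fun _ => Or.inr hp0.le).integrable_of_hasCompactSupport
      (hs.comp_left (g := fun y => |y| ^ p) (by simp [hp0.ne']))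
  have hcos : Continuous fun x => |Real.cos x| ^ p :=
    continuous_cos.abs.rpow_const fun _ => Or.inr hp0.le
  have hcos_periodic : Function.Periodic (fun x => |Real.cos x| ^ p) π := fun x => by
    simp [cos_add_pi]
  have hmean_nonneg : 0 ≤ (∫ x in Set.Ioc 0 π, |Real.cos x| ^ p) / π :=
    div_nonneg (setIntegral_nonneg measurableSet_Ioc fun _ _ => by positivity) pi_pos.le
  rw [← mul_rpow hmean_nonneg (integral_nonneg fun _ => by positivity)]
  refine ((hcos_periodic.tendsto_integral_mul_comp_mul pi_pos hcos hψp).rpow_const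
    (Or.inr (by positivity))).congr fun lam => ?_
  simp_rw [abs_mul, mul_rpow (abs_nonneg _) (abs_nonneg _)]
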